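/- Let T > 0, let A, B, C : [0,T] → M_{d}(ℝ) be continuous with A(t) and C(t) symmetric for all t, and let Φ : [0,T] → M_{d}(ℂ) be of class C¹ solving the matrix Riccati equation Φ'(t) + A(t) + Φ(t) B(t) + B(t)ᵀ Φ(t) + Φ(t) C(t) Φ(t) = 0 on [0,T]. If Φ(0) is symmetric (Φ(0)ᵀ = Φ(0)) and the imaginary part Im Φ(0) is positive definite, then for every t ∈ [0,T] the matrix Φ(t) is symmetric and Im Φ(t) is positive definite. -/

import Mathlib

open scoped Matrix
attribute [local instance] Matrix.normedAddCommGroup Matrix.normedSpace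

namespace Riccati



variable {d : ℕ}

lemma norm_mul_le' {α : Type*} [NonUnitalNormedRing α] (X Y : Matrix (Fin d) (Fin d) α) :
    ‖X * Y‖ ≤ d * ‖X‖ * ‖Y‖ := by
  rw [Matrix.norm_le_iff (by positivity)]
  intro i j
  calc ‖(X * Y) i j‖ = ‖∑ k, X i k * Y k j‖ := by rw [Matrix.mul_apply]
    _ ≤ ∑ k, ‖X i k * Y k j‖ := norm_sum_le _ _
    _ ≤ ∑ _k : Fin d, ‖X‖ * ‖Y‖ := Finset.sum_le_sum fun k _ =>
        (norm_mul_le _ _).trans (mul_le_mul (Matrix.norm_entry_le_entrywise_sup_norm X)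
          (Matrix.norm_entry_le_entrywise_sup_norm Y) (norm_nonneg _) (norm_nonneg _))
    _ = d * ‖X‖ * ‖Y‖ := by simp [Finset.sum_const, Finset.card_univ, mul_assoc]

lemma norm_transpose {α : Type*} [NormedAddCommGroup α] (X : Matrix (Fin d) (Fin d) α) :
    ‖Xᵀ‖ = ‖X‖ := by
  refine le_antisymm ?_ ?_ <;> rw [Matrix.norm_le_iff (norm_nonneg _)] <;> intro i j
  · exact Matrix.norm_entry_le_entrywise_sup_norm X
  · exact Matrix.norm_entry_le_entrywise_sup_norm Xᵀ

lemma norm_map_ofReal (R : Matrix (Fin d) (Fin d) ℝ) :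
    ‖R.map (Complex.ofReal)‖ = ‖R‖ := by
  refine le_antisymm ?_ ?_ <;> rw [Matrix.norm_le_iff (norm_nonneg _)] <;> intro i j
  · simpa [Matrix.map_apply] using Matrix.norm_entry_le_entrywise_sup_norm R (i := i) (j := j)
  · simpa [Matrix.map_apply] using
      Matrix.norm_entry_le_entrywise_sup_norm (R.map (Complex.ofReal)) (i := i) (j := j)

lemma norm_map_re (X : Matrix (Fin d) (Fin d) ℂ) : ‖X.map Complex.re‖ ≤ ‖X‖ := by
  rw [Matrix.norm_le_iff (norm_nonneg _)]
  intro i j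
  exact (Complex.abs_re_le_norm _).trans (Matrix.norm_entry_le_entrywise_sup_norm X)

lemma abs_trace_le (X : Matrix (Fin d) (Fin d) ℝ) : |Matrix.trace X| ≤ d * ‖X‖ := by
  calc |Matrix.trace X| ≤ ∑ i, |X i i| := Finset.abs_sum_le_sum_abs _ _
    _ ≤ ∑ _i : Fin d, ‖X‖ := Finset.sum_le_sum fun i _ =>
        Matrix.norm_entry_le_entrywise_sup_norm X
    _ = d * ‖X‖ := by simp [Finset.sum_const, Finset.card_univ]

lemma map_im_mul (X Y : Matrix (Fin d) (Fin d) ℂ) :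
    (X * Y).map Complex.im =
      X.map Complex.re * Y.map Complex.im + X.map Complex.im * Y.map Complex.re := by
  ext i j
  simp [Matrix.mul_apply, Matrix.map_apply, Complex.im_sum, Complex.mul_im,
    Finset.sum_add_distrib]

lemma map_re_mul (X Y : Matrix (Fin d) (Fin d) ℂ) :
    (X * Y).map Complex.re =
      X.map Complex.re * Y.map Complex.re - X.map Complex.im * Y.map Complex.im := by
  ext i j
  simp [Matrix.mul_apply, Matrix.map_apply, Complex.re_sum, Complex.mul_re,
    Finset.sum_sub_distrib]

lemma map_im_ofReal (R : Matrix (Fin d) (Fin d) ℝ) : (R.map (Complex.ofReal)).map Complex.im = 0 := by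
  ext i j; simp [Matrix.map_apply]

lemma map_re_ofReal (R : Matrix (Fin d) (Fin d) ℝ) : (R.map (Complex.ofReal)).map Complex.re = R := by
  ext i j; simp [Matrix.map_apply]

lemma map_im_add (X Y : Matrix (Fin d) (Fin d) ℂ) :
    (X + Y).map Complex.im = X.map Complex.im + Y.map Complex.im := by
  ext i j; simp [Matrix.map_apply]

lemma map_im_neg (X : Matrix (Fin d) (Fin d) ℂ) : (-X).map Complex.im = -(X.map Complex.im) := by
  ext i j; simp [Matrix.map_apply]

lemma map_im_transpose (X : Matrix (Fin d) (Fin d) ℂ) :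
    (Xᵀ).map Complex.im = (X.map Complex.im)ᵀ := by
  ext i j; simp [Matrix.map_apply]




variable {d : ℕ}

/-- `map Complex.im` as a continuous linear map. -/
noncomputable def imCLM (d : ℕ) :
    Matrix (Fin d) (Fin d) ℂ →L[ℝ] Matrix (Fin d) (Fin d) ℝ :=
  LinearMap.toContinuousLinearMap
    { toFun := fun M => M.map Complex.im
      map_add' := fun X Y => by ext i j; simp [Matrix.map_apply]
      map_smul' := fun c X => by ext i j; simp [Matrix.map_apply] }

@[simp] lemma imCLM_apply (M : Matrix (Fin d) (Fin d) ℂ) : imCLM d M = M.map Complex.im := rfl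

/-- transpose as a continuous linear map. -/
noncomputable def transCLM (d : ℕ) :
    Matrix (Fin d) (Fin d) ℂ →L[ℝ] Matrix (Fin d) (Fin d) ℂ :=
  LinearMap.toContinuousLinearMap
    { toFun := fun M => Mᵀ
      map_add' := fun X Y => by ext i j; simp
      map_smul' := fun c X => by ext i j; simp }

@[simp] lemma transCLM_apply (M : Matrix (Fin d) (Fin d) ℂ) : transCLM d M = Mᵀ := rfl

lemma HasDerivWithinAt.matrix_im {f : ℝ → Matrix (Fin d) (Fin d) ℂ}
    {f' : Matrix (Fin d) (Fin d) ℂ} {s : Set ℝ} {x : ℝ} (h : HasDerivWithinAt f f' s x) :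
    HasDerivWithinAt (fun t => (f t).map Complex.im) (f'.map Complex.im) s x :=
  (imCLM d).hasFDerivAt.comp_hasDerivWithinAt x h

lemma HasDerivWithinAt.matrix_transpose {f : ℝ → Matrix (Fin d) (Fin d) ℂ}
    {f' : Matrix (Fin d) (Fin d) ℂ} {s : Set ℝ} {x : ℝ} (h : HasDerivWithinAt f f' s x) :
    HasDerivWithinAt (fun t => (f t)ᵀ) (f'ᵀ) s x :=
  (transCLM d).hasFDerivAt.comp_hasDerivWithinAt x h




variable {d : ℕ}

/-- The determinant as a continuous multilinear map in the rows. -/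
noncomputable def cdet (d : ℕ) : ContinuousMultilinearMap ℝ (fun _ : Fin d => (Fin d → ℝ)) ℝ :=
  MultilinearMap.mkContinuous
    ((Matrix.detRowAlternating : AlternatingMap ℝ (Fin d → ℝ) ℝ (Fin d)).toMultilinearMap)
    (d.factorial : ℝ) (by
      intro m
      have : (Matrix.detRowAlternating (R := ℝ) (n := Fin d)).toMultilinearMap m
          = Matrix.det (Matrix.of m) := rfl
      rw [this, Matrix.det_apply]
      calc ‖∑ σ : Equiv.Perm (Fin d), Equiv.Perm.sign σ • ∏ i, Matrix.of m (σ i) i‖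
          ≤ ∑ σ : Equiv.Perm (Fin d), ‖Equiv.Perm.sign σ • ∏ i, Matrix.of m (σ i) i‖ :=
            norm_sum_le _ _
        _ ≤ ∑ _σ : Equiv.Perm (Fin d), ∏ i, ‖m i‖ := by
            refine Finset.sum_le_sum fun σ _ => ?_
            have h1 : ‖Equiv.Perm.sign σ • ∏ i, Matrix.of m (σ i) i‖
                = ‖∏ i, Matrix.of m (σ i) i‖ := by
              rcases Int.units_eq_one_or (Equiv.Perm.sign σ) with h | h <;>
                simp [h, Units.smul_def]
            rw [h1]
            have h2 : ‖∏ i, Matrix.of m (σ i) i‖ ≤ ∏ i, ‖m (σ i)‖ := by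
              rw [Real.norm_eq_abs, Finset.abs_prod]
              exact Finset.prod_le_prod (fun i _ => abs_nonneg _)
                (fun i _ => norm_le_pi_norm (m (σ i)) i)
            refine h2.trans_eq ?_
            exact Equiv.prod_comp σ (fun i => ‖m i‖)
        _ = (d.factorial : ℝ) * ∏ i, ‖m i‖ := by
            simp [Finset.sum_const, Finset.card_univ, Fintype.card_perm])

lemma cdet_apply (m : Fin d → (Fin d → ℝ)) : cdet d m = Matrix.det (Matrix.of m) := by
  simp only [cdet, MultilinearMap.coe_mkContinuous]
  rfl

lemma hasDerivWithinAt_det {X : ℝ → Matrix (Fin d) (Fin d) ℝ} {X' : Matrix (Fin d) (Fin d) ℝ}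
    {s : Set ℝ} {x : ℝ} (h : HasDerivWithinAt X X' s x) :
    HasDerivWithinAt (fun t => (X t).det)
      (∑ i, ((X x).updateRow i (X' i)).det) s x := by
  classical
  have hF : HasFDerivAt (cdet d) ((cdet d).linearDeriv (X x)) (X x) :=
    (cdet d).hasFDerivAt (x := X x)
  have h2 : HasDerivWithinAt (fun t => cdet d (X t)) ((cdet d).linearDeriv (X x) X') s x :=
    hF.comp_hasDerivWithinAt x h
  have h3 : (cdet d).linearDeriv (X x) X' = ∑ i, ((X x).updateRow i (X' i)).det := by
    refine Eq.trans (ContinuousMultilinearMap.linearDeriv_apply ..) ?_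
    simp only [cdet_apply]
    rfl
  rw [h3] at h2
  have h4 : (fun t => cdet d (X t)) = fun t => (X t).det := funext fun t => cdet_apply _
  rw [h4] at h2
  exact h2




variable {d : ℕ}

lemma sum_det_updateRow (X P : Matrix (Fin d) (Fin d) ℝ) (hX : Xᵀ = X) :
    ∑ i, (X.updateRow i (P i)).det = Matrix.trace (X.adjugate * Pᵀ) := by
  have h1 : ∀ i, (X.updateRow i (P i)).det = (Matrix.adjugate Xᵀ *ᵥ (P i)) i := fun i => by
    rw [← Matrix.cramer_eq_adjugate_mulVec, Matrix.cramer_transpose_apply]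
  simp only [h1, hX]
  simp [Matrix.trace, Matrix.diag, Matrix.mul_apply, Matrix.mulVec, dotProduct,
    Matrix.transpose_apply]

lemma trace_adj_mul_left (X Y : Matrix (Fin d) (Fin d) ℝ) :
    Matrix.trace (X.adjugate * (X * Y)) = X.det * Matrix.trace Y := by
  rw [← mul_assoc, Matrix.adjugate_mul, Matrix.smul_mul, one_mul, Matrix.trace_smul, smul_eq_mul]

lemma trace_adj_mul_right (X Y : Matrix (Fin d) (Fin d) ℝ) :
    Matrix.trace (X.adjugate * (Y * X)) = X.det * Matrix.trace Y := by
  rw [← mul_assoc, Matrix.trace_mul_comm, ← mul_assoc, Matrix.mul_adjugate, Matrix.smul_mul,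
    one_mul, Matrix.trace_smul, smul_eq_mul]

lemma posDef_of_posSemidef_det_ne_zero {M : Matrix (Fin d) (Fin d) ℝ}
    (h : M.PosSemidef) (hdet : M.det ≠ 0) : M.PosDef := by
  refine Matrix.posDef_iff_dotProduct_mulVec.mpr ⟨h.1, fun x hx => ?_⟩
  rcases lt_or_eq_of_le (h.dotProduct_mulVec_nonneg x) with hlt | heq
  · exact hlt
  · exfalso
    have h0 : M *ᵥ x = 0 := (h.dotProduct_mulVec_zero_iff x).mp heq.symm
    exact hdet (Matrix.exists_mulVec_eq_zero_iff.mp ⟨x, hx, h0⟩)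

lemma continuous_quad_matrix (x : Fin d → ℝ) :
    Continuous (fun M : Matrix (Fin d) (Fin d) ℝ => x ⬝ᵥ (M *ᵥ x)) := by
  unfold dotProduct Matrix.mulVec
  refine continuous_finset_sum _ fun i _ => ?_
  refine continuous_const.mul (continuous_finset_sum _ fun j _ => ?_)
  exact (continuous_id.matrix_elem i j).mul continuous_const

lemma continuous_quad_vec (M : Matrix (Fin d) (Fin d) ℝ) :
    Continuous (fun x : Fin d → ℝ => x ⬝ᵥ (M *ᵥ x)) := by
  unfold dotProduct Matrix.mulVec
  refine continuous_finset_sum _ fun i _ => ?_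
  exact (continuous_apply i).mul (continuous_finset_sum _ fun j _ =>
    continuous_const.mul (continuous_apply j))

lemma abs_quad_le (M : Matrix (Fin d) (Fin d) ℝ) (x : Fin d → ℝ) :
    |x ⬝ᵥ (M *ᵥ x)| ≤ (d : ℝ)^2 * ‖M‖ * ‖x‖^2 := by
  calc |x ⬝ᵥ (M *ᵥ x)| = |∑ i, x i * ∑ j, M i j * x j| := rfl
    _ ≤ ∑ i, |x i * ∑ j, M i j * x j| := Finset.abs_sum_le_sum_abs _ _
    _ ≤ ∑ _i : Fin d, ∑ _j : Fin d, ‖x‖ * (‖M‖ * ‖x‖) := by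
        refine Finset.sum_le_sum fun i _ => ?_
        rw [abs_mul]
        calc |x i| * |∑ j, M i j * x j| ≤ ‖x‖ * ∑ j, |M i j * x j| := by
              refine mul_le_mul (norm_le_pi_norm x i) (Finset.abs_sum_le_sum_abs _ _)
                (abs_nonneg _) (norm_nonneg _)
          _ ≤ ‖x‖ * ∑ _j : Fin d, ‖M‖ * ‖x‖ := by
              refine mul_le_mul_of_nonneg_left (Finset.sum_le_sum fun j _ => ?_) (norm_nonneg _)
              rw [abs_mul]
              exact mul_le_mul (Matrix.norm_entry_le_entrywise_sup_norm M)
                (norm_le_pi_norm x j) (abs_nonneg _) (norm_nonneg _)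
          _ = ∑ _j : Fin d, ‖x‖ * (‖M‖ * ‖x‖) := by
              simp [Finset.sum_const, Finset.card_univ, mul_comm, mul_left_comm, mul_assoc]
    _ = (d : ℝ)^2 * ‖M‖ * ‖x‖^2 := by
        simp [Finset.sum_const, Finset.card_univ]
        ring

lemma exists_posdef_ball {M : Matrix (Fin d) (Fin d) ℝ} (hM : M.PosDef) :
    ∃ ε > 0, ∀ N : Matrix (Fin d) (Fin d) ℝ, N.IsHermitian → ‖N - M‖ < ε → N.PosDef := by
  rcases isEmpty_or_nonempty (Fin d) with hie | hne
  · exact ⟨1, one_pos, fun N hN _ => ⟨hN, fun x hx => absurd (Subsingleton.elim x 0) hx⟩⟩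
  · have hnt : Nontrivial (Fin d → ℝ) := inferInstance
    obtain ⟨x₀, hx₀⟩ : (Metric.sphere (0 : Fin d → ℝ) 1).Nonempty :=
      NormedSpace.sphere_nonempty.mpr zero_le_one
    obtain ⟨z, hzS, hzmin⟩ := (isCompact_sphere (0 : Fin d → ℝ) 1).exists_isMinOn ⟨x₀, hx₀⟩
      (continuous_quad_vec M).continuousOn
    have hznorm : ‖z‖ = 1 := by simpa using mem_sphere_zero_iff_norm.mp hzS
    have hzne : z ≠ 0 := by intro h; rw [h] at hznorm; simp at hznorm
    set c := z ⬝ᵥ (M *ᵥ z) with hc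
    have hcpos : 0 < c := by
      have := (Matrix.posDef_iff_dotProduct_mulVec.mp hM).2 hzne
      simpa using this
    refine ⟨c / ((d : ℝ)^2 + 1), by positivity, fun N hN hNM => Matrix.posDef_iff_dotProduct_mulVec.mpr ⟨hN, fun x hx => ?_⟩⟩
    have hxn : (0 : ℝ) < ‖x‖ := norm_pos_iff.mpr hx
    set u := ‖x‖⁻¹ • x with hu
    have hun : ‖u‖ = 1 := by
      rw [hu, norm_smul, norm_inv, norm_norm, inv_mul_cancel₀ hxn.ne']
    have huS : u ∈ Metric.sphere (0 : Fin d → ℝ) 1 := by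
      simpa [mem_sphere_zero_iff_norm] using hun
    have hMu : c ≤ u ⬝ᵥ (M *ᵥ u) := hzmin huS
    have hdiff : |u ⬝ᵥ ((N - M) *ᵥ u)| ≤ (d : ℝ)^2 * ‖N - M‖ := by
      have := abs_quad_le (N - M) u
      rwa [hun, one_pow, mul_one] at this
    have hNu : 0 < u ⬝ᵥ (N *ᵥ u) := by
      have hsplit : u ⬝ᵥ (N *ᵥ u) = u ⬝ᵥ (M *ᵥ u) + u ⬝ᵥ ((N - M) *ᵥ u) := by
        rw [Matrix.sub_mulVec, dotProduct_sub]
        ring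
      rw [hsplit]
      have h2 : (d : ℝ)^2 * ‖N - M‖ < c := by
        calc (d : ℝ)^2 * ‖N - M‖ ≤ ((d : ℝ)^2 + 1) * ‖N - M‖ := by
              nlinarith [norm_nonneg (N - M)]
          _ < ((d : ℝ)^2 + 1) * (c / ((d : ℝ)^2 + 1)) := by
              refine mul_lt_mul_of_pos_left hNM (by positivity)
          _ = c := by field_simp
      nlinarith [abs_le.mp hdiff]
    have heq : u ⬝ᵥ (N *ᵥ u) = ‖x‖⁻¹^2 * (x ⬝ᵥ (N *ᵥ x)) := by
      rw [hu, Matrix.mulVec_smul, dotProduct_smul, smul_dotProduct]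
      simp only [smul_eq_mul]
      ring
    rw [star_trivial]
    by_contra hq0
    push_neg at hq0
    have hle : ‖x‖⁻¹^2 * (x ⬝ᵥ (N *ᵥ x)) ≤ 0 :=
      mul_nonpos_of_nonneg_of_nonpos (by positivity) hq0
    rw [← heq] at hle
    linarith


lemma isHermitian_of_symm {d : ℕ} {M : Matrix (Fin d) (Fin d) ℝ} (h : Mᵀ = M) :
    M.IsHermitian := by
  ext i j
  simp only [Matrix.conjTranspose_apply, star_trivial]
  exact congrFun (congrFun h.symm j) i

end Riccati

section Main

/-- **The matrix Riccati flow preserves symmetry and positivity of the imaginary part.**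
Let `A, B, C : [0,T] → M_d(ℝ)` be continuous with `A(t)`, `C(t)` symmetric, and let
`Φ : [0,T] → M_d(ℂ)` be `C¹` solving `Φ' + A + Φ B + Bᵀ Φ + Φ C Φ = 0` on `[0,T]`.
If `Φ(0)` is symmetric and `Im Φ(0)` is positive definite, then `Φ(t)` is symmetric and
`Im Φ(t)` is positive definite for every `t ∈ [0,T]`. -/
theorem stmt_19 (d : ℕ) (T : ℝ) (hT : 0 < T)
    (A B C : ℝ → Matrix (Fin d) (Fin d) ℝ)
    (hAc : ContinuousOn A (Set.Icc 0 T)) (hBc : ContinuousOn B (Set.Icc 0 T))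
    (hCc : ContinuousOn C (Set.Icc 0 T))
    (hAs : ∀ t ∈ Set.Icc (0:ℝ) T, (A t)ᵀ = A t)
    (hCs : ∀ t ∈ Set.Icc (0:ℝ) T, (C t)ᵀ = C t)
    (Φ : ℝ → Matrix (Fin d) (Fin d) ℂ)
    (hΦ : ∀ t ∈ Set.Icc (0:ℝ) T,
      HasDerivWithinAt Φ
        (-((A t).map (Complex.ofReal) + Φ t * (B t).map (Complex.ofReal) +
            ((B t)ᵀ).map (Complex.ofReal) * Φ t +
            Φ t * (C t).map (Complex.ofReal) * Φ t))
        (Set.Icc 0 T) t)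
    (hΦ0symm : (Φ 0)ᵀ = Φ 0)
    (hΦ0pos : ((Φ 0).map Complex.im).PosDef) :
    ∀ t ∈ Set.Icc (0:ℝ) T, (Φ t)ᵀ = Φ t ∧ ((Φ t).map Complex.im).PosDef := by
  classical
  have hT' : (0:ℝ) ≤ T := hT.le
  -- clamp to [0,T]
  set π : ℝ → ℝ := fun t => max 0 (min t T) with hπ
  have hπmem : ∀ t, π t ∈ Set.Icc (0:ℝ) T := fun t =>
    ⟨le_max_left _ _, max_le hT' (min_le_right _ _)⟩
  have hπid : ∀ t ∈ Set.Icc (0:ℝ) T, π t = t := fun t ht => by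
    rw [hπ]; simp only; rw [min_eq_left ht.2, max_eq_right ht.1]
  -- continuity and bounds
  have hΦcont : ContinuousOn Φ (Set.Icc 0 T) := fun t ht => (hΦ t ht).continuousWithinAt
  obtain ⟨cB, hcB⟩ := isCompact_Icc.exists_bound_of_continuousOn hBc
  obtain ⟨cC, hcC⟩ := isCompact_Icc.exists_bound_of_continuousOn hCc
  obtain ⟨cP, hcP⟩ := isCompact_Icc.exists_bound_of_continuousOn hΦcont
  have hcB0 : 0 ≤ cB := le_trans (norm_nonneg _) (hcB 0 ⟨le_rfl, hT'⟩)
  have hcC0 : 0 ≤ cC := le_trans (norm_nonneg _) (hcC 0 ⟨le_rfl, hT'⟩)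
  have hcP0 : 0 ≤ cP := le_trans (norm_nonneg _) (hcP 0 ⟨le_rfl, hT'⟩)
  have hmapT : ∀ (R : Matrix (Fin d) (Fin d) ℝ),
      (R.map Complex.ofReal)ᵀ = (Rᵀ).map Complex.ofReal := fun R => by
    ext i j; simp [Matrix.map_apply, Matrix.transpose_apply]
  -- ### Part 1 : symmetry
  have hsym : ∀ t ∈ Set.Icc (0:ℝ) T, (Φ t)ᵀ = Φ t := by
    set v : ℝ → Matrix (Fin d) (Fin d) ℂ → Matrix (Fin d) (Fin d) ℂ := fun t M =>
      -( ((B (π t))ᵀ).map Complex.ofReal * M + M * (B (π t)).map Complex.ofReal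
        + M * ((C (π t)).map Complex.ofReal * (Φ (π t))ᵀ)
        + Φ (π t) * (C (π t)).map Complex.ofReal * M) with hv
    have hKnn : (0:ℝ) ≤ 2*d*cB + 2*d*d*cC*cP := by positivity
    have hLip : ∀ t, LipschitzWith (Real.toNNReal (2*d*cB + 2*d*d*cC*cP)) (v t) := by
      intro t
      apply LipschitzWith.of_dist_le_mul
      intro M N
      rw [dist_eq_norm, dist_eq_norm]
      have hdiff : v t M - v t N =
          -( ((B (π t))ᵀ).map Complex.ofReal * (M - N) + (M - N) * (B (π t)).map Complex.ofReal
            + (M - N) * ((C (π t)).map Complex.ofReal * (Φ (π t))ᵀ)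
            + Φ (π t) * (C (π t)).map Complex.ofReal * (M - N)) := by
        rw [hv]; simp only; noncomm_ring
      rw [hdiff, norm_neg]
      have hBb : ‖((B (π t))ᵀ).map Complex.ofReal‖ ≤ cB := by
        rw [Riccati.norm_map_ofReal, Riccati.norm_transpose]; exact hcB _ (hπmem t)
      have hBb' : ‖(B (π t)).map Complex.ofReal‖ ≤ cB := by
        rw [Riccati.norm_map_ofReal]; exact hcB _ (hπmem t)
      have hCb : ‖(C (π t)).map Complex.ofReal‖ ≤ cC := by
        rw [Riccati.norm_map_ofReal]; exact hcC _ (hπmem t)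
      have hPb : ‖Φ (π t)‖ ≤ cP := hcP _ (hπmem t)
      have hPb' : ‖(Φ (π t))ᵀ‖ ≤ cP := by rw [Riccati.norm_transpose]; exact hPb
      have hΔ : (0:ℝ) ≤ ‖M - N‖ := norm_nonneg _
      have h1 : ‖((B (π t))ᵀ).map Complex.ofReal * (M - N)‖ ≤ d * cB * ‖M - N‖ := by
        refine (Riccati.norm_mul_le' _ _).trans ?_
        gcongr
      have h2 : ‖(M - N) * (B (π t)).map Complex.ofReal‖ ≤ d * ‖M - N‖ * cB := by
        refine (Riccati.norm_mul_le' _ _).trans ?_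
        gcongr
      have h3 : ‖(M - N) * ((C (π t)).map Complex.ofReal * (Φ (π t))ᵀ)‖
          ≤ d * ‖M - N‖ * (d * cC * cP) := by
        refine (Riccati.norm_mul_le' _ _).trans ?_
        have := (Riccati.norm_mul_le' ((C (π t)).map Complex.ofReal) ((Φ (π t))ᵀ))
        have hb : ‖(C (π t)).map Complex.ofReal * (Φ (π t))ᵀ‖ ≤ d * cC * cP :=
          this.trans (by gcongr)
        gcongr
      have h4 : ‖Φ (π t) * (C (π t)).map Complex.ofReal * (M - N)‖
          ≤ d * (d * cP * cC) * ‖M - N‖ := by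
        refine (Riccati.norm_mul_le' _ _).trans ?_
        have hb : ‖Φ (π t) * (C (π t)).map Complex.ofReal‖ ≤ d * cP * cC :=
          (Riccati.norm_mul_le' _ _).trans (by gcongr)
        gcongr
      calc ‖((B (π t))ᵀ).map Complex.ofReal * (M - N) + (M - N) * (B (π t)).map Complex.ofReal
            + (M - N) * ((C (π t)).map Complex.ofReal * (Φ (π t))ᵀ)
            + Φ (π t) * (C (π t)).map Complex.ofReal * (M - N)‖
          ≤ ‖((B (π t))ᵀ).map Complex.ofReal * (M - N)‖
            + ‖(M - N) * (B (π t)).map Complex.ofReal‖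
            + ‖(M - N) * ((C (π t)).map Complex.ofReal * (Φ (π t))ᵀ)‖
            + ‖Φ (π t) * (C (π t)).map Complex.ofReal * (M - N)‖ := by
            refine (norm_add_le _ _).trans ?_
            have := (norm_add_le (((B (π t))ᵀ).map Complex.ofReal * (M - N))
              ((M - N) * (B (π t)).map Complex.ofReal))
            have h5 := norm_add_le (((B (π t))ᵀ).map Complex.ofReal * (M - N)
              + (M - N) * (B (π t)).map Complex.ofReal)
              ((M - N) * ((C (π t)).map Complex.ofReal * (Φ (π t))ᵀ))
            linarith [norm_nonneg (Φ (π t) * (C (π t)).map Complex.ofReal * (M - N))]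
        _ ≤ (2*d*cB + 2*d*d*cC*cP) * ‖M - N‖ := by nlinarith [h1, h2, h3, h4]
        _ = (Real.toNNReal (2*d*cB + 2*d*d*cC*cP) : ℝ) * ‖M - N‖ := by
            rw [Real.coe_toNNReal _ hKnn]
    have hgderiv : ∀ t ∈ Set.Ico (0:ℝ) T,
        HasDerivWithinAt (fun _ : ℝ => (0 : Matrix (Fin d) (Fin d) ℂ))
          (v t ((fun _ : ℝ => (0 : Matrix (Fin d) (Fin d) ℂ)) t)) (Set.Ici t) t := by
      intro t ht
      have : v t 0 = 0 := by rw [hv]; simp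
      simp only [this]
      exact hasDerivWithinAt_const t (Set.Ici t) _
    have hfderiv : ∀ t ∈ Set.Ico (0:ℝ) T,
        HasDerivWithinAt (fun s => (Φ s)ᵀ - Φ s)
          (v t ((Φ t)ᵀ - Φ t)) (Set.Ici t) t := by
      intro t ht
      have htI : t ∈ Set.Icc (0:ℝ) T := ⟨ht.1, ht.2.le⟩
      have hd := ((Riccati.HasDerivWithinAt.matrix_transpose (hΦ t htI)).sub
        (hΦ t htI)).mono_of_mem_nhdsWithin (Icc_mem_nhdsGE_of_mem ht)
      refine hd.congr_deriv (Eq.symm ?_)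
      rw [hv]; simp only
      rw [hπid t htI]
      have hA' : ((A t).map Complex.ofReal)ᵀ = (A t).map Complex.ofReal := by
        rw [hmapT, hAs t htI]
      have hC' : ((C t).map Complex.ofReal)ᵀ = (C t).map Complex.ofReal := by
        rw [hmapT, hCs t htI]
      have hB' : (((B t)ᵀ).map Complex.ofReal) = ((B t).map Complex.ofReal)ᵀ :=
        (hmapT (B t)).symm
      rw [hB']
      simp only [Matrix.transpose_neg, Matrix.transpose_add, Matrix.transpose_mul,
        Matrix.transpose_transpose, hA', hC']
      noncomm_ring
    have huniq := ODE_solution_unique hLip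
      (f := fun s => (Φ s)ᵀ - Φ s) (g := fun _ => 0) (a := 0) (b := T)
      (((Riccati.transCLM d).continuous.comp_continuousOn hΦcont).sub hΦcont)
      hfderiv continuousOn_const hgderiv (by simpa using sub_eq_zero.mpr hΦ0symm)
    intro t ht
    have := huniq ht
    exact sub_eq_zero.mp this
  -- ### Part 2 : positivity of the imaginary part
  have hχsym : ∀ t ∈ Set.Icc (0:ℝ) T, ((Φ t).map Complex.im)ᵀ = (Φ t).map Complex.im := by
    intro t ht
    ext i j
    simp only [Matrix.transpose_apply, Matrix.map_apply]
    rw [congrFun (congrFun (hsym t ht).symm j) i]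
    rfl
  have hφsym : ∀ t ∈ Set.Icc (0:ℝ) T, ((Φ t).map Complex.re)ᵀ = (Φ t).map Complex.re := by
    intro t ht
    ext i j
    simp only [Matrix.transpose_apply, Matrix.map_apply]
    rw [congrFun (congrFun (hsym t ht).symm j) i]
    rfl
  have hχcont : ContinuousOn (fun s => (Φ s).map Complex.im) (Set.Icc (0:ℝ) T) := by
    have := (Riccati.imCLM d).continuous.comp_continuousOn hΦcont
    exact this
  have hχ' : ∀ t ∈ Set.Icc (0:ℝ) T,
      HasDerivWithinAt (fun s => (Φ s).map Complex.im)
        (-( (Φ t).map Complex.im * B t + (B t)ᵀ * (Φ t).map Complex.im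
          + (Φ t).map Complex.re * C t * (Φ t).map Complex.im
          + (Φ t).map Complex.im * C t * (Φ t).map Complex.re)) (Set.Icc 0 T) t := by
    intro t ht
    have hd := Riccati.HasDerivWithinAt.matrix_im (hΦ t ht)
    convert hd using 1
    rw [eq_comm]
    rw [Riccati.map_im_neg, Riccati.map_im_add, Riccati.map_im_add, Riccati.map_im_add]
    rw [Riccati.map_im_mul (Φ t), Riccati.map_im_mul (((B t)ᵀ).map Complex.ofReal),
      Riccati.map_im_mul (Φ t * (C t).map Complex.ofReal), Riccati.map_re_mul (Φ t),
      Riccati.map_im_mul (Φ t)]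
    simp only [Riccati.map_im_ofReal, Riccati.map_re_ofReal, Matrix.mul_zero, Matrix.zero_mul,
      add_zero, zero_add, sub_zero, mul_zero, zero_mul]
    abel
  set aa : ℝ → ℝ := fun t => -2 * (Matrix.trace (B (π t))
    + Matrix.trace ((Φ (π t)).map Complex.re * C (π t))) with haa
  have hD' : ∀ t ∈ Set.Icc (0:ℝ) T,
      HasDerivWithinAt (fun s => ((Φ s).map Complex.im).det)
        (aa t * ((Φ t).map Complex.im).det) (Set.Icc 0 T) t := by
    intro t ht
    have hdet := Riccati.hasDerivWithinAt_det (hχ' t ht)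
    convert hdet using 1
    rw [Riccati.sum_det_updateRow _ _ (hχsym t ht)]
    have hWt : (-((Φ t).map Complex.im * B t + (B t)ᵀ * (Φ t).map Complex.im
        + (Φ t).map Complex.re * C t * (Φ t).map Complex.im
        + (Φ t).map Complex.im * C t * (Φ t).map Complex.re))ᵀ
        = -((B t)ᵀ * (Φ t).map Complex.im + (Φ t).map Complex.im * B t
          + (Φ t).map Complex.im * (C t * (Φ t).map Complex.re)
          + (Φ t).map Complex.re * (C t * (Φ t).map Complex.im)) := by
      simp only [Matrix.transpose_neg, Matrix.transpose_add, Matrix.transpose_mul,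
        Matrix.transpose_transpose, hχsym t ht, hφsym t ht, hCs t ht]
      try noncomm_ring
    rw [hWt]
    rw [show ((Φ t).map Complex.im).adjugate *
        -((B t)ᵀ * (Φ t).map Complex.im + (Φ t).map Complex.im * B t
          + (Φ t).map Complex.im * (C t * (Φ t).map Complex.re)
          + (Φ t).map Complex.re * (C t * (Φ t).map Complex.im))
        = -(((Φ t).map Complex.im).adjugate * ((B t)ᵀ * (Φ t).map Complex.im)
          + ((Φ t).map Complex.im).adjugate * ((Φ t).map Complex.im * B t)
          + ((Φ t).map Complex.im).adjugate * ((Φ t).map Complex.im * (C t * (Φ t).map Complex.re))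
          + ((Φ t).map Complex.im).adjugate * (((Φ t).map Complex.re * C t) * (Φ t).map Complex.im))
        from by noncomm_ring]
    rw [Matrix.trace_neg, Matrix.trace_add, Matrix.trace_add, Matrix.trace_add]
    rw [Riccati.trace_adj_mul_right ((Φ t).map Complex.im) ((B t)ᵀ),
      Riccati.trace_adj_mul_left ((Φ t).map Complex.im) (B t),
      Riccati.trace_adj_mul_left ((Φ t).map Complex.im) (C t * (Φ t).map Complex.re),
      Riccati.trace_adj_mul_right ((Φ t).map Complex.im) ((Φ t).map Complex.re * C t)]
    rw [Matrix.trace_transpose, Matrix.trace_mul_comm (C t) ((Φ t).map Complex.re)]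
    simp only [haa, hπid t ht]
    ring
  have hDcont : ContinuousOn (fun s => ((Φ s).map Complex.im).det) (Set.Icc (0:ℝ) T) :=
    fun r hr => (hD' r hr).continuousWithinAt
  have haabd : ∀ s, |aa s| ≤ 2*(d*cB + d*(d*cP*cC)) := by
    intro s
    have h1 : |Matrix.trace (B (π s))| ≤ d * cB :=
      (Riccati.abs_trace_le _).trans (by gcongr; exact hcB _ (hπmem s))
    have hb : ‖(Φ (π s)).map Complex.re * C (π s)‖ ≤ d*cP*cC := by
      refine (Riccati.norm_mul_le' _ _).trans ?_
      have hφb : ‖(Φ (π s)).map Complex.re‖ ≤ cP :=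
        (Riccati.norm_map_re _).trans (hcP _ (hπmem s))
      have hCb : ‖C (π s)‖ ≤ cC := hcC _ (hπmem s)
      gcongr
    have h2 : |Matrix.trace ((Φ (π s)).map Complex.re * C (π s))| ≤ d * (d*cP*cC) :=
      (Riccati.abs_trace_le _).trans (by gcongr)
    calc |aa s| = 2 * |Matrix.trace (B (π s))
        + Matrix.trace ((Φ (π s)).map Complex.re * C (π s))| := by
          rw [haa]; simp only; rw [abs_mul]; norm_num
      _ ≤ 2 * (|Matrix.trace (B (π s))|
          + |Matrix.trace ((Φ (π s)).map Complex.re * C (π s))|) := by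
          have := abs_add_le (Matrix.trace (B (π s)))
            (Matrix.trace ((Φ (π s)).map Complex.re * C (π s)))
          linarith
      _ ≤ 2*(d*cB + d*(d*cP*cC)) := by linarith
  have hDne : ∀ τ ∈ Set.Icc (0:ℝ) T, ((Φ τ).map Complex.im).det ≠ 0 := by
    intro τ hτ hDτ
    have hD0 : 0 < ((Φ 0).map Complex.im).det := hΦ0pos.det_pos
    rcases eq_or_lt_of_le hτ.1 with h0 | h0
    · rw [← h0] at hDτ; exact hD0.ne' hDτ
    · have hKnn : (0:ℝ) ≤ 2*(d*cB + d*(d*cP*cC)) := by positivity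
      have hLip : ∀ s : ℝ, LipschitzOnWith (Real.toNNReal (2*(d*cB + d*(d*cP*cC))))
          (fun x : ℝ => aa s * x) Set.univ := by
        intro s
        apply LipschitzWith.lipschitzOnWith
        apply LipschitzWith.of_dist_le_mul
        intro x y
        rw [Real.dist_eq, Real.dist_eq, ← mul_sub, abs_mul, Real.coe_toNNReal _ hKnn]
        exact mul_le_mul_of_nonneg_right (haabd s) (abs_nonneg _)
      have hfd : ∀ s ∈ Set.Ioc (0:ℝ) τ, HasDerivWithinAt (fun r => ((Φ r).map Complex.im).det)
          (aa s * ((Φ s).map Complex.im).det) (Set.Iic s) s := by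
        intro s hs
        have hsI : s ∈ Set.Icc (0:ℝ) T := ⟨hs.1.le, hs.2.trans hτ.2⟩
        exact (hD' s hsI).mono_of_mem_nhdsWithin (Icc_mem_nhdsLE_of_mem ⟨hs.1, hsI.2⟩)
      have hgd : ∀ s ∈ Set.Ioc (0:ℝ) τ, HasDerivWithinAt (fun _ : ℝ => (0:ℝ))
          (aa s * (0:ℝ)) (Set.Iic s) s := by
        intro s hs
        simpa using (hasDerivWithinAt_const s (Set.Iic s) (0:ℝ))
      have huniq := ODE_solution_unique_of_mem_Icc_left (v := fun s x => aa s * x)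
        (s := fun _ => Set.univ) (fun s _ => hLip s)
        (f := fun r => ((Φ r).map Complex.im).det) (g := fun _ => 0) (a := 0) (b := τ)
        (hDcont.mono (Set.Icc_subset_Icc_right hτ.2)) hfd (fun s _ => Set.mem_univ _)
        continuousOn_const hgd (fun s _ => Set.mem_univ _) (by simpa using hDτ)
      have h00 := huniq (Set.left_mem_Icc.mpr h0.le)
      simp only at h00
      exact hD0.ne' h00
  have hPD : ∀ t ∈ Set.Icc (0:ℝ) T, ((Φ t).map Complex.im).PosDef := by
    by_contra hcon
    push_neg at hcon
    obtain ⟨t₁, ht₁, hnpd⟩ := hcon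
    set N : Set ℝ := {t | t ∈ Set.Icc (0:ℝ) T ∧ ¬ ((Φ t).map Complex.im).PosDef} with hN
    have ht₁N : t₁ ∈ N := ⟨ht₁, hnpd⟩
    have hNne : N.Nonempty := ⟨t₁, ht₁N⟩
    have hNbdd : BddBelow N := ⟨0, fun t htN => htN.1.1⟩
    set τ := sInf N with hτdef
    have hτ0 : 0 ≤ τ := le_csInf hNne fun t htN => htN.1.1
    have hτT : τ ≤ T := le_trans (csInf_le hNbdd ht₁N) ht₁.2
    have hτI : τ ∈ Set.Icc (0:ℝ) T := ⟨hτ0, hτT⟩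
    have hbelow : ∀ s ∈ Set.Icc (0:ℝ) T, s < τ → ((Φ s).map Complex.im).PosDef := by
      intro s hs hlt
      by_contra hns
      exact absurd (csInf_le hNbdd ⟨hs, hns⟩) (not_le.mpr hlt)
    have hτnpd : ¬ ((Φ τ).map Complex.im).PosDef := by
      intro hpd
      obtain ⟨ε, hε, hball⟩ := Riccati.exists_posdef_ball hpd
      obtain ⟨δ, hδ, hcont⟩ := Metric.continuousWithinAt_iff.mp (hχcont τ hτI) ε hε
      have hlb : ∀ n ∈ N, τ + δ ≤ n := by
        intro n hn
        by_contra hlt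
        push_neg at hlt
        have hnτ : τ ≤ n := csInf_le hNbdd hn
        have hdist : dist n τ < δ := by
          rw [Real.dist_eq, abs_of_nonneg (by linarith)]; linarith
        have hclose := hcont hn.1 hdist
        rw [dist_eq_norm] at hclose
        exact hn.2 (hball _ (Riccati.isHermitian_of_symm (hχsym n hn.1)) hclose)
      have : τ + δ ≤ τ := le_csInf hNne hlb
      linarith
    have hτpos : 0 < τ := by
      rcases eq_or_lt_of_le hτ0 with h0 | h0
      · exact absurd (h0 ▸ hΦ0pos) hτnpd
      · exact h0
    have hpsd : ((Φ τ).map Complex.im).PosSemidef := by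
      refine Matrix.posSemidef_iff_dotProduct_mulVec.mpr ⟨Riccati.isHermitian_of_symm (hχsym τ hτI), fun x => ?_⟩
      rw [star_trivial]
      haveI hnb : (nhdsWithin τ (Set.Ico (0:ℝ) τ)).NeBot := by
        rw [← mem_closure_iff_nhdsWithin_neBot, closure_Ico hτpos.ne]
        exact Set.right_mem_Icc.mpr hτ0
      have hsub : Set.Ico (0:ℝ) τ ⊆ Set.Icc (0:ℝ) T :=
        fun y hy => ⟨hy.1, hy.2.le.trans hτT⟩
      have hc : ContinuousWithinAt (fun s => x ⬝ᵥ (((Φ s).map Complex.im) *ᵥ x))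
          (Set.Icc (0:ℝ) T) τ :=
        ((Riccati.continuous_quad_matrix x).comp_continuousOn hχcont) τ hτI
      have htend := (hc.mono hsub).tendsto
      refine ge_of_tendsto htend ?_
      filter_upwards [self_mem_nhdsWithin] with s hs
      have hpd := hbelow s (hsub hs) hs.2
      have hq := hpd.posSemidef.dotProduct_mulVec_nonneg x
      rwa [star_trivial] at hq
    exact hτnpd (Riccati.posDef_of_posSemidef_det_ne_zero hpsd (hDne τ hτI))
  exact fun t ht => ⟨hsym t ht, hPD t ht⟩






end Main
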